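/- For all distinct commuting non-identity n-qubit Pauli matrices P₁ and P₂, every entry of the channel representation of G_{P₁P₂} belongs to the set {0, 1, 1/2, −1/2}. -/

import Mathlib

open Matrix Complex

/-- Length-`n` vectors over `𝔽₂`, indexing computational basis states of `n` qubits. -/
abbrev QVec (n : ℕ) := Fin n → ZMod 2

/-- Integer (here: natural number) dot product of two 0/1 vectors. -/
def dotN {n : ℕ} (a b : QVec n) : ℕ := ∑ i, (a i).val * (b i).val

/-- The `n`-qubit Pauli matrix `P_{a,b}`. -/
noncomputable def Pauli {n : ℕ} (a b : QVec n) : Matrix (QVec n) (QVec n) ℂ :=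
  fun x y => if x = y + a then Complex.I ^ dotN a b * (-1 : ℂ) ^ dotN b y else 0

/-- A `2^n × 2^n` unitary is Clifford if it maps every Pauli matrix to a
Pauli matrix up to a sign `±1`, under conjugation. -/
def IsClifford {n : ℕ} (C : Matrix (QVec n) (QVec n) ℂ) : Prop :=
  C ∈ Matrix.unitaryGroup (QVec n) ℂ ∧
    ∀ a b : QVec n, ∃ a' b' : QVec n, ∃ ε : ℂ, (ε = 1 ∨ ε = -1) ∧
      C * Pauli a b * Cᴴ = ε • Pauli a' b'

/-- The channel representation `Û` of a `2^n × 2^n` matrix `U`: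
rows/columns indexed by Pauli matrices, `Û_{rs} = (1/2^n) Tr(P_r U P_s U†)`. -/
noncomputable def chan {n : ℕ} (U : Matrix (QVec n) (QVec n) ℂ) :
    Matrix (QVec n × QVec n) (QVec n × QVec n) ℂ :=
  fun r s => ((1 : ℂ) / 2 ^ n) * Matrix.trace (Pauli r.1 r.2 * U * Pauli s.1 s.2 * Uᴴ)

/-- The gate `CS ⊗ I_{2^{n-2}}`, where `CS = diag(1,1,1,i)` acts on the first two qubits. -/
noncomputable def CSgate (n : ℕ) : Matrix (QVec n) (QVec n) ℂ :=
  Matrix.diagonal fun x =>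
    if h : 1 < n then
      (if x ⟨0, Nat.lt_of_lt_of_le Nat.zero_lt_one h.le⟩ = 1 ∧ x ⟨1, h⟩ = 1 then Complex.I else 1)
    else 1

/-- The Clifford+CS group `𝒥ₙ^{CS}`: the subgroup of the unitary group generated by the
Clifford unitaries together with `CS ⊗ I_{2^{n-2}}`. -/
noncomputable def CliffordCSGroup (n : ℕ) : Subgroup (Matrix.unitaryGroup (QVec n) ℂ) :=
  Subgroup.closure
    {u | IsClifford (u : Matrix (QVec n) (QVec n) ℂ) ∨ (u : Matrix (QVec n) (QVec n) ℂ) = CSgate n}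

/-- `G_{P₁P₂} = ((3+i)/4) I + ((1−i)/4)(P₁ + P₂ − P₁P₂)`. -/
noncomputable def Ggate {n : ℕ} (P₁ P₂ : Matrix (QVec n) (QVec n) ℂ) :
    Matrix (QVec n) (QVec n) ℂ :=
  ((3 + Complex.I) / 4) • (1 : Matrix (QVec n) (QVec n) ℂ) +
    ((1 - Complex.I) / 4) • (P₁ + P₂ - P₁ * P₂)

namespace ChanAux
variable {n : ℕ}
noncomputable def PP (p : QVec n × QVec n) : Matrix (QVec n) (QVec n) ℂ := Pauli p.1 p.2
noncomputable def ph (p q : QVec n × QVec n) : ℂ :=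
  Complex.I ^ (dotN p.1 p.2 + dotN q.1 q.2 + 3 * dotN (p.1 + q.1) (p.2 + q.2)) *
    (-1 : ℂ) ^ dotN p.2 q.1
lemma zmod2_add_self (u : ZMod 2) : u + u = 0 := by revert u; decide
lemma qvec_add_self (v : QVec n) : v + v = 0 := by
  funext i; exact zmod2_add_self (v i)
lemma pair_add_self (x : QVec n × QVec n) : x + x = 0 :=
  Prod.ext (qvec_add_self x.1) (qvec_add_self x.2)
lemma dotN_comm (a b : QVec n) : dotN a b = dotN b a :=
  Finset.sum_congr rfl fun i _ => Nat.mul_comm _ _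
lemma dotN_zero_left (b : QVec n) : dotN 0 b = 0 := by
  unfold dotN; simp [ZMod.val_zero]
lemma dotN_zero_right (b : QVec n) : dotN b 0 = 0 := by
  rw [dotN_comm, dotN_zero_left]
lemma neg_one_pow_mod (m k : ℕ) : (-1 : ℂ) ^ (m % 2 * k) = (-1) ^ (m * k) := by
  conv_rhs => rw [← Nat.div_add_mod m 2]
  rw [add_mul, pow_add, mul_comm 2 (m / 2), mul_assoc, pow_mul]
  norm_num
  rw [Nat.mul_left_comm, pow_mul]
  norm_num
lemma np_add_left (b d y : QVec n) :
    (-1 : ℂ) ^ dotN (b + d) y = (-1) ^ dotN b y * (-1) ^ dotN d y := by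
  rw [← pow_add]
  unfold dotN
  rw [← Finset.sum_add_distrib, ← Finset.prod_pow_eq_pow_sum, ← Finset.prod_pow_eq_pow_sum]
  refine Finset.prod_congr rfl fun i _ => ?_
  rw [Pi.add_apply, ZMod.val_add, neg_one_pow_mod, add_mul]
lemma np_add_right (b y z : QVec n) :
    (-1 : ℂ) ^ dotN b (y + z) = (-1) ^ dotN b y * (-1) ^ dotN b z := by
  rw [dotN_comm, np_add_left, dotN_comm y b, dotN_comm z b]

-- NEW PART
lemma I_pow_four : (Complex.I : ℂ) ^ 4 = 1 := by
  rw [show (4 : ℕ) = 2 * 2 from rfl, pow_mul, Complex.I_sq]; norm_num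

lemma pauli_mul (p q : QVec n × QVec n) : PP p * PP q = ph p q • PP (p + q) := by
  ext x y
  rw [Matrix.mul_apply]
  rw [Finset.sum_eq_single (y + q.1)]
  rotate_left
  · intro z _ hz
    have : Pauli q.1 q.2 z y = 0 := by rw [Pauli, if_neg hz]
    simp [PP, this]
  · intro h; exact absurd (Finset.mem_univ _) h
  simp only [PP, Pauli, Matrix.smul_apply, smul_eq_mul, Prod.fst_add, Prod.snd_add,
    eq_self_iff_true, if_true]
  have harg : y + q.1 + p.1 = y + (p.1 + q.1) := by
    rw [add_assoc, add_comm q.1 p.1]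
  rw [harg]
  by_cases hxy : x = y + (p.1 + q.1)
  · rw [if_pos hxy, if_pos hxy]
    rw [np_add_right p.2 y q.1, np_add_left p.2 q.2 y]
    unfold ph
    rw [pow_add, pow_add]
    have h4 : (Complex.I : ℂ) ^ (3 * dotN (p.1 + q.1) (p.2 + q.2)) *
        Complex.I ^ (dotN (p.1 + q.1) (p.2 + q.2)) = 1 := by
      rw [← pow_add, show 3 * dotN (p.1 + q.1) (p.2 + q.2) + dotN (p.1 + q.1) (p.2 + q.2)
        = 4 * dotN (p.1 + q.1) (p.2 + q.2) by ring, pow_mul, I_pow_four, one_pow]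
    linear_combination (-(Complex.I ^ dotN p.1 p.2) * Complex.I ^ dotN q.1 q.2 *
      (-1 : ℂ) ^ dotN p.2 q.1 * (-1 : ℂ) ^ dotN p.2 y * (-1 : ℂ) ^ dotN q.2 y) * h4
  · rw [if_neg hxy, if_neg hxy, zero_mul, mul_zero]

lemma ph_self (p : QVec n × QVec n) : ph p p = 1 := by
  unfold ph
  rw [qvec_add_self, qvec_add_self, dotN_zero_left, Nat.mul_zero, Nat.add_zero,
    ← two_mul, pow_mul, Complex.I_sq, dotN_comm p.2 p.1, ← pow_add, ← two_mul, pow_mul]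
  norm_num

lemma ph_zero_left (q : QVec n × QVec n) : ph 0 q = 1 := by
  unfold ph
  have h1 : ((0 : QVec n × QVec n)).1 = 0 := rfl
  have h2 : ((0 : QVec n × QVec n)).2 = 0 := rfl
  rw [h1, h2, dotN_zero_left, dotN_zero_left, zero_add, zero_add, zero_add,
    show dotN q.1 q.2 + 3 * dotN q.1 q.2 = 4 * dotN q.1 q.2 by ring, pow_mul, I_pow_four]
  norm_num

lemma ph_zero_right (q : QVec n × QVec n) : ph q 0 = 1 := by
  unfold ph
  have h1 : ((0 : QVec n × QVec n)).1 = 0 := rfl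
  have h2 : ((0 : QVec n × QVec n)).2 = 0 := rfl
  rw [h1, h2, dotN_zero_left, dotN_zero_right, add_zero, add_zero, add_zero,
    show dotN q.1 q.2 + 3 * dotN q.1 q.2 = 4 * dotN q.1 q.2 by ring, pow_mul, I_pow_four]
  norm_num

lemma pauli_zero : PP (0 : QVec n × QVec n) = 1 := by
  ext x y
  simp only [PP, Pauli, Matrix.one_apply]
  have h1 : ((0 : QVec n × QVec n)).1 = 0 := rfl
  have h2 : ((0 : QVec n × QVec n)).2 = 0 := rfl
  rw [h1, h2, add_zero, dotN_zero_left, dotN_zero_left, pow_zero, pow_zero, mul_one]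

lemma pauli_entry (t : QVec n × QVec n) : PP t t.1 0 = Complex.I ^ dotN t.1 t.2 := by
  simp only [PP, Pauli]
  rw [if_pos (zero_add t.1).symm, dotN_zero_right, pow_zero, mul_one]

lemma smul_pp_cancel {c d : ℂ} (t : QVec n × QVec n) (h : c • PP t = d • PP t) : c = d := by
  have h0 := congr_arg (fun M : Matrix (QVec n) (QVec n) ℂ => M t.1 0) h
  simp only [Matrix.smul_apply, pauli_entry, smul_eq_mul] at h0
  exact mul_right_cancel₀ (pow_ne_zero _ Complex.I_ne_zero) h0

lemma smul_one_cancel {c : ℂ} (h : c • (1 : Matrix (QVec n) (QVec n) ℂ) = 1) : c = 1 := by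
  have h0 := congr_arg (fun M : Matrix (QVec n) (QVec n) ℂ => M 0 0) h
  simpa [Matrix.smul_apply, Matrix.one_apply] using h0

lemma pauli_sq (p : QVec n × QVec n) : PP p * PP p = 1 := by
  rw [pauli_mul, ph_self, one_smul, pair_add_self, pauli_zero]

lemma ph_mul_symm (p q : QVec n × QVec n) : ph p q * ph q p = 1 := by
  have h1 : (PP p * PP q) * (PP q * PP p) = 1 := by
    rw [mul_assoc, ← mul_assoc (PP q), pauli_sq, one_mul, pauli_sq]
  rw [pauli_mul p q, pauli_mul q p, add_comm q p, smul_mul, Matrix.mul_smul, smul_smul,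
    pauli_sq] at h1
  exact smul_one_cancel h1

lemma pp_swap (t s : QVec n × QVec n) : PP t * PP s = (ph t s * ph t s) • (PP s * PP t) := by
  rw [pauli_mul, pauli_mul, smul_smul, add_comm s t]
  congr 1
  rw [mul_assoc, ph_mul_symm, mul_one]


-- NEW PART
lemma zmod2_cases (u : ZMod 2) : u = 0 ∨ u = 1 := by revert u; decide

lemma zmod2_sum (f : ZMod 2 → ℂ) : ∑ t : ZMod 2, f t = f 0 + f 1 := by
  rw [show (Finset.univ : Finset (ZMod 2)) = {0, 1} from by decide]
  rw [Finset.sum_insert (by decide), Finset.sum_singleton]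

lemma char_sum (b : QVec n) :
    (∑ x : QVec n, (-1 : ℂ) ^ dotN b x) = if b = 0 then (2 : ℂ) ^ n else 0 := by
  have h1 : (∑ x : QVec n, (-1 : ℂ) ^ dotN b x)
      = ∑ x : QVec n, ∏ i, (-1 : ℂ) ^ ((b i).val * (x i).val) := by
    refine Finset.sum_congr rfl fun x _ => ?_
    rw [Finset.prod_pow_eq_pow_sum]; rfl
  have hps := Finset.prod_univ_sum (fun _ : Fin n => (Finset.univ : Finset (ZMod 2)))
    (fun i t => ((-1 : ℂ)) ^ ((b i).val * t.val))
  rw [h1, ← Fintype.piFinset_univ, ← hps]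
  have h2 : ∀ i : Fin n, (∑ t : ZMod 2, (-1 : ℂ) ^ ((b i).val * t.val))
      = if b i = 0 then 2 else 0 := by
    intro i
    rw [zmod2_sum]
    have e0 : ((0 : ZMod 2)).val = 0 := rfl
    have e1 : ((1 : ZMod 2)).val = 1 := rfl
    rcases zmod2_cases (b i) with h | h
    · rw [h, if_pos rfl, e0]; norm_num
    · rw [h, if_neg (by decide), e0, e1]; norm_num
  rw [Finset.prod_congr rfl (fun i _ => h2 i)]
  by_cases hb : b = 0
  · rw [if_pos hb]
    have h3 : ∀ i : Fin n, (if b i = 0 then (2:ℂ) else 0) = 2 := fun i => by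
      rw [hb]; simp
    rw [Finset.prod_congr rfl (fun i _ => h3 i), Finset.prod_const]
    simp
  · rw [if_neg hb]
    obtain ⟨i, hi⟩ : ∃ i, b i ≠ 0 := by
      by_contra hcon; push_neg at hcon; exact hb (funext hcon)
    exact Finset.prod_eq_zero (Finset.mem_univ i) (by rw [if_neg hi])

lemma trace_pauli (p : QVec n × QVec n) :
    Matrix.trace (PP p) = if p = 0 then (2 : ℂ) ^ n else 0 := by
  rw [Matrix.trace]
  by_cases hp1 : p.1 = 0
  · have hentry : ∀ x : QVec n, Matrix.diag (PP p) x = (-1 : ℂ) ^ dotN p.2 x := by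
      intro x
      simp only [Matrix.diag, PP, Pauli]
      rw [hp1, add_zero, if_pos rfl, dotN_zero_left, pow_zero, one_mul]
    rw [Finset.sum_congr rfl (fun x _ => hentry x), char_sum]
    by_cases hp2 : p.2 = 0
    · rw [if_pos hp2, if_pos (Prod.ext hp1 hp2)]
    · rw [if_neg hp2, if_neg (fun h => hp2 (by rw [h]; rfl))]
  · have hentry : ∀ x : QVec n, Matrix.diag (PP p) x = 0 := by
      intro x
      simp only [Matrix.diag, PP, Pauli]
      rw [if_neg]
      intro h
      exact hp1 (add_left_cancel (a := x) (by rw [add_zero, ← h]))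
    rw [Finset.sum_congr rfl (fun x _ => hentry x), if_neg (fun h => hp1 (by rw [h]; rfl))]
    simp

lemma trace_word (r t s u : QVec n × QVec n) :
    Matrix.trace (PP r * PP t * PP s * PP u) =
      (2 : ℂ) ^ n * ((ph t s * ph t s) *
        (ph t u * (if s + (t + u) = r then ph s (t + u) else 0))) := by
  have h1 : PP r * PP t * PP s * PP u
      = ((ph t s * ph t s) * (ph t u * (ph s (t + u) * ph r (s + (t + u)))))
        • PP (r + (s + (t + u))) := by
    rw [mul_assoc (PP r), pp_swap t s, Matrix.mul_smul, smul_mul, ← mul_assoc (PP r),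
      mul_assoc (PP r * PP s), pauli_mul t u, Matrix.mul_smul, mul_assoc (PP r),
      pauli_mul s (t + u), Matrix.mul_smul, pauli_mul r (s + (t + u)),
      smul_smul, smul_smul, smul_smul]
    congr 1
    ring
  rw [h1, Matrix.trace_smul, smul_eq_mul, trace_pauli]
  by_cases h : s + (t + u) = r
  · rw [if_pos h, h, ph_self, if_pos (pair_add_self r)]
    ring
  · rw [if_neg h, if_neg]
    · ring
    · intro h0
      exact h (by
        have h2 := congrArg (fun z => r + z) h0
        rwa [← add_assoc, pair_add_self, zero_add, add_zero] at h2)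

lemma eps_eq (p q : QVec n × QVec n) :
    ph p q * ph p q = (-1 : ℂ) ^ dotN p.1 q.2 * (-1 : ℂ) ^ dotN p.2 q.1 := by
  have hsq : ∀ k : ℕ, (-1 : ℂ) ^ k * (-1 : ℂ) ^ k = 1 := fun k => by
    rw [← mul_pow]; norm_num
  have hI2 : ∀ m : ℕ, (Complex.I : ℂ) ^ m * Complex.I ^ m = (-1 : ℂ) ^ m := fun m => by
    rw [← mul_pow, Complex.I_mul_I]
  have key : ph p q * ph p q = (-1 : ℂ) ^ (dotN p.1 p.2 + dotN q.1 q.2 +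
      3 * dotN (p.1 + q.1) (p.2 + q.2)) *
      ((-1 : ℂ) ^ dotN p.2 q.1 * (-1 : ℂ) ^ dotN p.2 q.1) := by
    unfold ph
    rw [show ∀ z x : ℂ, z * x * (z * x) = z * z * (x * x) from fun z x => by ring, hI2]
  rw [key, hsq, mul_one]
  have h3 : ∀ k : ℕ, (-1 : ℂ) ^ (3 * k) = (-1 : ℂ) ^ k := fun k => by
    rw [show 3 * k = k + (k + k) by ring, pow_add, pow_add, hsq, mul_one]
  rw [pow_add, pow_add, h3, np_add_left, np_add_right, np_add_right, dotN_comm q.1 p.2]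
  linear_combination ((-1 : ℂ) ^ dotN q.1 q.2 * (-1 : ℂ) ^ dotN q.1 q.2 *
      ((-1 : ℂ) ^ dotN p.1 q.2) * ((-1 : ℂ) ^ dotN p.2 q.1)) * hsq (dotN p.1 p.2) +
    (((-1 : ℂ) ^ dotN p.1 q.2) * ((-1 : ℂ) ^ dotN p.2 q.1)) * hsq (dotN q.1 q.2)

lemma pauli_herm (p : QVec n × QVec n) : (PP p)ᴴ = PP p := by
  ext x y
  rw [Matrix.conjTranspose_apply]
  simp only [PP, Pauli]
  by_cases h : x = y + p.1
  · have hy : y = x + p.1 := by rw [h, add_assoc, qvec_add_self, add_zero]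
    rw [if_pos hy, if_pos h]
    have hrhs : (-1 : ℂ) ^ dotN p.2 y = (-1) ^ dotN p.2 x * (-1) ^ dotN p.2 p.1 := by
      rw [hy, np_add_right]
    rw [hrhs, star_mul', star_pow, star_pow, Complex.star_def, Complex.conj_I]
    have hstar : (starRingEnd ℂ) (-1 : ℂ) = -1 := by simp
    rw [hstar, neg_pow, dotN_comm p.2 p.1]
    ring
  · rw [if_neg h, if_neg (fun hy => h (by rw [hy, add_assoc, qvec_add_self, add_zero]))]
    exact star_zero _

lemma sq_eq_one' {z : ℂ} (h : z * z = 1) : z = 1 ∨ z = -1 := mul_self_eq_one_iff.mp h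

lemma sq_eq_neg_one {z : ℂ} (h : z * z = -1) : z = Complex.I ∨ z = -Complex.I := by
  have h0 : (z - Complex.I) * (z + Complex.I) = 0 := by
    linear_combination h - Complex.I_sq
  rcases mul_eq_zero.mp h0 with h1 | h1
  · left; exact sub_eq_zero.mp h1
  · right; exact eq_neg_of_add_eq_zero_left h1

lemma mem_helper {x : ℂ} (h : x = 0 ∨ x = 1 ∨ x = 1/2 ∨ x = -(1/2)) :
    x ∈ ({0, 1, 1/2, -(1/2)} : Set ℂ) := by
  rcases h with h | h | h | h <;> rw [h] <;> simp

lemma neg_one_pow_cases (k : ℕ) : (-1 : ℂ) ^ k = 1 ∨ (-1 : ℂ) ^ k = -1 := by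
  rcases Nat.even_or_odd k with h | h
  · left; exact h.neg_one_pow
  · right; exact h.neg_one_pow


end ChanAux


set_option maxHeartbeats 1000000000 in
open ChanAux in
/-- For distinct commuting non-identity Pauli matrices `P₁`, `P₂`, every entry of the
channel representation of `G_{P₁P₂}` lies in `{0, 1, 1/2, −1/2}`. -/
theorem chan_Ggate_entries (n : ℕ) (a₁ b₁ a₂ b₂ : QVec n)
    (h₁ : Pauli a₁ b₁ ≠ 1) (h₂ : Pauli a₂ b₂ ≠ 1)
    (hne : Pauli a₁ b₁ ≠ Pauli a₂ b₂)
    (hc : Commute (Pauli a₁ b₁) (Pauli a₂ b₂))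
    (r s : QVec n × QVec n) :
    chan (Ggate (Pauli a₁ b₁) (Pauli a₂ b₂)) r s ∈
      ({0, 1, 1 / 2, -(1 / 2)} : Set ℂ) := by
  classical
  set p₁ : QVec n × QVec n := (a₁, b₁) with hp₁def
  set p₂ : QVec n × QVec n := (a₂, b₂) with hp₂def
  have e₁ : Pauli a₁ b₁ = PP p₁ := rfl
  have e₂ : Pauli a₂ b₂ = PP p₂ := rfl
  have er : Pauli r.1 r.2 = PP r := rfl
  have es : Pauli s.1 s.2 = PP s := rfl
  have hp10 : p₁ ≠ 0 := fun h => h₁ (by rw [e₁, h, pauli_zero])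
  have hp20 : p₂ ≠ 0 := fun h => h₂ (by rw [e₂, h, pauli_zero])
  have hp12 : p₁ ≠ p₂ := fun h => hne (by rw [e₁, e₂, h])
  have hcP : PP p₁ * PP p₂ = PP p₂ * PP p₁ := hc.eq
  have hph21 : ph p₂ p₁ = ph p₁ p₂ := by
    have h := hcP
    rw [pauli_mul, pauli_mul, add_comm p₂ p₁] at h
    exact (smul_pp_cancel _ h).symm
  have hww : ph p₁ p₂ * ph p₁ p₂ = 1 := by
    have h := ph_mul_symm p₁ p₂; rwa [hph21] at h
  have hw : ph p₁ p₂ = 1 ∨ ph p₁ p₂ = -1 := sq_eq_one' hww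
  have hstarw : star (ph p₁ p₂) = ph p₁ p₂ := by
    rcases hw with h | h <;> rw [h] <;> simp
  have h11 : p₁ + p₁ = 0 := pair_add_self p₁
  have h22 : p₂ + p₂ = 0 := pair_add_self p₂
  have h33 : (p₁ + p₂) + (p₁ + p₂) = 0 := pair_add_self _
  have h21 : p₂ + p₁ = p₁ + p₂ := add_comm _ _
  have h13 : p₁ + (p₁ + p₂) = p₂ := by rw [← add_assoc, h11, zero_add]
  have h31 : (p₁ + p₂) + p₁ = p₂ := by rw [add_comm, h13]
  have h23 : p₂ + (p₁ + p₂) = p₁ := by rw [add_comm p₁ p₂, ← add_assoc, h22, zero_add]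
  have h32 : (p₁ + p₂) + p₂ = p₁ := by rw [add_comm, h23]
  have hP3 : ph p₁ p₂ • (PP p₁ * PP p₂) = PP (p₁ + p₂) := by
    rw [pauli_mul, smul_smul, hww, one_smul]
  have hph13 : ph p₁ (p₁ + p₂) = ph p₁ p₂ := by
    have hA : PP p₁ * PP (p₁ + p₂) = ph p₁ (p₁ + p₂) • PP p₂ := by
      rw [pauli_mul, h13]
    have hB : PP p₁ * PP (p₁ + p₂) = ph p₁ p₂ • PP p₂ := by
      rw [← hP3, Matrix.mul_smul, ← mul_assoc, pauli_sq, one_mul]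
    exact smul_pp_cancel p₂ (hA.symm.trans hB)
  have hph31 : ph (p₁ + p₂) p₁ = ph p₁ p₂ := by
    have hA : PP (p₁ + p₂) * PP p₁ = ph (p₁ + p₂) p₁ • PP p₂ := by
      rw [pauli_mul, h31]
    have hB : PP (p₁ + p₂) * PP p₁ = ph p₁ p₂ • PP p₂ := by
      rw [← hP3, smul_mul, mul_assoc, ← hcP, ← mul_assoc, pauli_sq, one_mul]
    exact smul_pp_cancel p₂ (hA.symm.trans hB)
  have hph23 : ph p₂ (p₁ + p₂) = ph p₁ p₂ := by
    have hA : PP p₂ * PP (p₁ + p₂) = ph p₂ (p₁ + p₂) • PP p₁ := by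
      rw [pauli_mul, h23]
    have hB : PP p₂ * PP (p₁ + p₂) = ph p₁ p₂ • PP p₁ := by
      rw [← hP3, Matrix.mul_smul, ← mul_assoc, ← hcP, mul_assoc, pauli_sq, mul_one]
    exact smul_pp_cancel p₁ (hA.symm.trans hB)
  have hph32 : ph (p₁ + p₂) p₂ = ph p₁ p₂ := by
    have hA : PP (p₁ + p₂) * PP p₂ = ph (p₁ + p₂) p₂ • PP p₁ := by
      rw [pauli_mul, h32]
    have hB : PP (p₁ + p₂) * PP p₂ = ph p₁ p₂ • PP p₁ := by
      rw [← hP3, smul_mul, mul_assoc, pauli_sq, mul_one]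
    exact smul_pp_cancel p₁ (hA.symm.trans hB)
  have hε₁ : ph p₁ s * ph p₁ s = 1 ∨ ph p₁ s * ph p₁ s = -1 := by
    rw [eps_eq, ← pow_add]; exact neg_one_pow_cases _
  have hε₂ : ph p₂ s * ph p₂ s = 1 ∨ ph p₂ s * ph p₂ s = -1 := by
    rw [eps_eq, ← pow_add]; exact neg_one_pow_cases _
  have hε₃eq : ph (p₁ + p₂) s * ph (p₁ + p₂) s
      = (ph p₁ s * ph p₁ s) * (ph p₂ s * ph p₂ s) := by
    rw [eps_eq, eps_eq, eps_eq]
    have f1 : (p₁ + p₂).1 = p₁.1 + p₂.1 := rfl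
    have f2 : (p₁ + p₂).2 = p₁.2 + p₂.2 := rfl
    rw [f1, f2, np_add_left, np_add_left]
    ring
  have hG : Ggate (Pauli a₁ b₁) (Pauli a₂ b₂)
      = ((3 + Complex.I) / 4) • PP (0 : QVec n × QVec n)
        + ((1 - Complex.I) / 4) • PP p₁ + ((1 - Complex.I) / 4) • PP p₂
        + (-(((1 - Complex.I) / 4) * ph p₁ p₂)) • PP (p₁ + p₂) := by
    simp only [Ggate]
    rw [e₁, e₂, pauli_mul p₁ p₂, ← pauli_zero]
    module
  have hc0 : star ((3 + Complex.I) / 4) = (3 - Complex.I) / 4 := by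
    simp [Complex.ext_iff]
  have hc1 : star ((1 - Complex.I) / 4) = (1 + Complex.I) / 4 := by
    simp [Complex.ext_iff]
  have hGH : (Ggate (Pauli a₁ b₁) (Pauli a₂ b₂))ᴴ
      = ((3 - Complex.I) / 4) • PP (0 : QVec n × QVec n)
        + ((1 + Complex.I) / 4) • PP p₁ + ((1 + Complex.I) / 4) • PP p₂
        + (-(((1 + Complex.I) / 4) * ph p₁ p₂)) • PP (p₁ + p₂) := by
    rw [hG]
    simp only [Matrix.conjTranspose_add, Matrix.conjTranspose_smul, pauli_herm,
      star_neg, star_mul', hstarw, hc0, hc1]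
    try module
  simp only [chan]
  rw [er, es, hGH, hG]
  simp only [Matrix.mul_add, Matrix.add_mul, Matrix.mul_smul, Matrix.smul_mul,
    Matrix.trace_add, Matrix.trace_smul, smul_eq_mul, trace_word,
    h11, h22, h33, h21, h13, h23, h31, h32, zero_add, add_zero,
    ph_zero_left, ph_zero_right, ph_self, hph21, hph13, hph31, hph23, hph32, hε₃eq,
    one_mul, mul_one]
  have h2n : (2 : ℂ) ^ n ≠ 0 := pow_ne_zero _ two_ne_zero
  by_cases hd0 : s = r
  · have c1 : ¬(s + p₁ = r) := fun h => hp10 (add_left_cancel ((h.trans hd0.symm).trans (add_zero s).symm))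
    have c2 : ¬(s + p₂ = r) := fun h => hp20 (add_left_cancel ((h.trans hd0.symm).trans (add_zero s).symm))
    have c3 : ¬(s + (p₁ + p₂) = r) := fun h => by
      have h' : p₁ + p₂ = 0 := add_left_cancel ((h.trans hd0.symm).trans (add_zero s).symm)
      exact hp12 (by rw [← h32, h', zero_add])
    rw [if_pos hd0, if_neg c1, if_neg c2, if_neg c3]
    simp only [mul_zero, mul_one, one_mul, zero_mul, add_zero, zero_add, neg_zero, neg_neg]
    rcases hε₁ with he1 | he1 <;> rcases hε₂ with he2 | he2 <;> rcases hw with hwv | hwv <;>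
      rw [he1, he2, hwv] <;>
      (apply mem_helper;
         first
         | (left; field_simp; ring_nf; (try norm_num [Complex.I_sq]); (try ring); done)
         | (right; left; field_simp; ring_nf; (try norm_num [Complex.I_sq]); (try ring); done)
         | (right; right; left; field_simp; ring_nf; (try norm_num [Complex.I_sq]); (try ring); done)
         | (right; right; right; field_simp; ring_nf; (try norm_num [Complex.I_sq]); (try ring); done))
  by_cases hd1 : s + p₁ = r
  · have c2 : ¬(s + p₂ = r) := fun h => hp12 (add_left_cancel (hd1.trans h.symm))
    have c3 : ¬(s + (p₁ + p₂) = r) := fun h => by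
      have h' : p₁ + p₂ = p₁ := add_left_cancel (h.trans hd1.symm)
      exact hp20 (by rw [← h13, h', h11])
    rw [if_pos hd1, if_neg hd0, if_neg c2, if_neg c3]
    simp only [mul_zero, mul_one, one_mul, zero_mul, add_zero, zero_add, neg_zero, neg_neg]
    have hsm : ph s p₁ * ph p₁ s = 1 := ph_mul_symm s p₁
    have hkey : ph s p₁ * ph s p₁ * (ph p₁ s * ph p₁ s) = 1 := by
      calc ph s p₁ * ph s p₁ * (ph p₁ s * ph p₁ s)
          = (ph s p₁ * ph p₁ s) * (ph s p₁ * ph p₁ s) := by ring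
        _ = 1 := by rw [hsm]; ring
    rcases hε₁ with he1 | he1
    · have hu : ph s p₁ * ph s p₁ = 1 := by rwa [he1, mul_one] at hkey
      rcases sq_eq_one' hu with hv | hv <;> rcases hε₂ with he2 | he2 <;>
        rcases hw with hwv | hwv <;> rw [he1, he2, hwv, hv] <;>
        (apply mem_helper;
         first
         | (left; field_simp; ring_nf; (try norm_num [Complex.I_sq]); (try ring); done)
         | (right; left; field_simp; ring_nf; (try norm_num [Complex.I_sq]); (try ring); done)
         | (right; right; left; field_simp; ring_nf; (try norm_num [Complex.I_sq]); (try ring); done)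
         | (right; right; right; field_simp; ring_nf; (try norm_num [Complex.I_sq]); (try ring); done))
    · have hu : ph s p₁ * ph s p₁ = -1 := by
        rw [he1] at hkey; linear_combination -hkey
      rcases sq_eq_neg_one hu with hv | hv <;> rcases hε₂ with he2 | he2 <;>
        rcases hw with hwv | hwv <;> rw [he1, he2, hwv, hv] <;>
        (apply mem_helper;
         first
         | (left; field_simp; ring_nf; (try norm_num [Complex.I_sq]); (try ring); done)
         | (right; left; field_simp; ring_nf; (try norm_num [Complex.I_sq]); (try ring); done)
         | (right; right; left; field_simp; ring_nf; (try norm_num [Complex.I_sq]); (try ring); done)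
         | (right; right; right; field_simp; ring_nf; (try norm_num [Complex.I_sq]); (try ring); done))
  by_cases hd2 : s + p₂ = r
  · have c3 : ¬(s + (p₁ + p₂) = r) := fun h => by
      have h' : p₁ + p₂ = p₂ := add_left_cancel (h.trans hd2.symm)
      exact hp10 (by rw [← h23, h', h22])
    rw [if_pos hd2, if_neg hd0, if_neg hd1, if_neg c3]
    simp only [mul_zero, mul_one, one_mul, zero_mul, add_zero, zero_add, neg_zero, neg_neg]
    have hsm : ph s p₂ * ph p₂ s = 1 := ph_mul_symm s p₂
    have hkey : ph s p₂ * ph s p₂ * (ph p₂ s * ph p₂ s) = 1 := by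
      calc ph s p₂ * ph s p₂ * (ph p₂ s * ph p₂ s)
          = (ph s p₂ * ph p₂ s) * (ph s p₂ * ph p₂ s) := by ring
        _ = 1 := by rw [hsm]; ring
    rcases hε₂ with he2 | he2
    · have hu : ph s p₂ * ph s p₂ = 1 := by rwa [he2, mul_one] at hkey
      rcases sq_eq_one' hu with hv | hv <;> rcases hε₁ with he1 | he1 <;>
        rcases hw with hwv | hwv <;> rw [he1, he2, hwv, hv] <;>
        (apply mem_helper;
         first
         | (left; field_simp; ring_nf; (try norm_num [Complex.I_sq]); (try ring); done)
         | (right; left; field_simp; ring_nf; (try norm_num [Complex.I_sq]); (try ring); done)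
         | (right; right; left; field_simp; ring_nf; (try norm_num [Complex.I_sq]); (try ring); done)
         | (right; right; right; field_simp; ring_nf; (try norm_num [Complex.I_sq]); (try ring); done))
    · have hu : ph s p₂ * ph s p₂ = -1 := by
        rw [he2] at hkey; linear_combination -hkey
      rcases sq_eq_neg_one hu with hv | hv <;> rcases hε₁ with he1 | he1 <;>
        rcases hw with hwv | hwv <;> rw [he1, he2, hwv, hv] <;>
        (apply mem_helper;
         first
         | (left; field_simp; ring_nf; (try norm_num [Complex.I_sq]); (try ring); done)
         | (right; left; field_simp; ring_nf; (try norm_num [Complex.I_sq]); (try ring); done)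
         | (right; right; left; field_simp; ring_nf; (try norm_num [Complex.I_sq]); (try ring); done)
         | (right; right; right; field_simp; ring_nf; (try norm_num [Complex.I_sq]); (try ring); done))
  by_cases hd3 : s + (p₁ + p₂) = r
  · rw [if_pos hd3, if_neg hd0, if_neg hd1, if_neg hd2]
    simp only [mul_zero, mul_one, one_mul, zero_mul, add_zero, zero_add, neg_zero, neg_neg]
    have hsm : ph s (p₁ + p₂) * ph (p₁ + p₂) s = 1 := ph_mul_symm s (p₁ + p₂)
    have hkey : ph s (p₁ + p₂) * ph s (p₁ + p₂) *
        (ph (p₁ + p₂) s * ph (p₁ + p₂) s) = 1 := by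
      calc ph s (p₁ + p₂) * ph s (p₁ + p₂) * (ph (p₁ + p₂) s * ph (p₁ + p₂) s)
          = (ph s (p₁ + p₂) * ph (p₁ + p₂) s) * (ph s (p₁ + p₂) * ph (p₁ + p₂) s) := by ring
        _ = 1 := by rw [hsm]; ring
    rw [hε₃eq] at hkey
    rcases hε₁ with he1 | he1 <;> rcases hε₂ with he2 | he2
    · have hu : ph s (p₁ + p₂) * ph s (p₁ + p₂) = 1 := by
        rw [he1, he2] at hkey; linear_combination hkey
      rcases sq_eq_one' hu with hv | hv <;> rcases hw with hwv | hwv <;>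
        rw [he1, he2, hwv, hv] <;>
        (apply mem_helper;
         first
         | (left; field_simp; ring_nf; (try norm_num [Complex.I_sq]); (try ring); done)
         | (right; left; field_simp; ring_nf; (try norm_num [Complex.I_sq]); (try ring); done)
         | (right; right; left; field_simp; ring_nf; (try norm_num [Complex.I_sq]); (try ring); done)
         | (right; right; right; field_simp; ring_nf; (try norm_num [Complex.I_sq]); (try ring); done))
    · have hu : ph s (p₁ + p₂) * ph s (p₁ + p₂) = -1 := by
        rw [he1, he2] at hkey; linear_combination -hkey
      rcases sq_eq_neg_one hu with hv | hv <;> rcases hw with hwv | hwv <;>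
        rw [he1, he2, hwv, hv] <;>
        (apply mem_helper;
         first
         | (left; field_simp; ring_nf; (try norm_num [Complex.I_sq]); (try ring); done)
         | (right; left; field_simp; ring_nf; (try norm_num [Complex.I_sq]); (try ring); done)
         | (right; right; left; field_simp; ring_nf; (try norm_num [Complex.I_sq]); (try ring); done)
         | (right; right; right; field_simp; ring_nf; (try norm_num [Complex.I_sq]); (try ring); done))
    · have hu : ph s (p₁ + p₂) * ph s (p₁ + p₂) = -1 := by
        rw [he1, he2] at hkey; linear_combination -hkey
      rcases sq_eq_neg_one hu with hv | hv <;> rcases hw with hwv | hwv <;>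
        rw [he1, he2, hwv, hv] <;>
        (apply mem_helper;
         first
         | (left; field_simp; ring_nf; (try norm_num [Complex.I_sq]); (try ring); done)
         | (right; left; field_simp; ring_nf; (try norm_num [Complex.I_sq]); (try ring); done)
         | (right; right; left; field_simp; ring_nf; (try norm_num [Complex.I_sq]); (try ring); done)
         | (right; right; right; field_simp; ring_nf; (try norm_num [Complex.I_sq]); (try ring); done))
    · have hu : ph s (p₁ + p₂) * ph s (p₁ + p₂) = 1 := by
        rw [he1, he2] at hkey; linear_combination hkey
      rcases sq_eq_one' hu with hv | hv <;> rcases hw with hwv | hwv <;>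
        rw [he1, he2, hwv, hv] <;>
        (apply mem_helper;
         first
         | (left; field_simp; ring_nf; (try norm_num [Complex.I_sq]); (try ring); done)
         | (right; left; field_simp; ring_nf; (try norm_num [Complex.I_sq]); (try ring); done)
         | (right; right; left; field_simp; ring_nf; (try norm_num [Complex.I_sq]); (try ring); done)
         | (right; right; right; field_simp; ring_nf; (try norm_num [Complex.I_sq]); (try ring); done))
  · rw [if_neg hd0, if_neg hd1, if_neg hd2, if_neg hd3]
    apply mem_helper
    left
    simp only [mul_zero, mul_one, one_mul, zero_mul, add_zero, zero_add, neg_zero, mul_neg, neg_neg]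
    try ring
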